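/- Let a, b, c be real numbers. For every n ∈ ℕ, every entry of the polynomial matrix Qₙ has degree at most n, the matrix formed by the coefficients of xⁿ of the entries of Qₙ equals Aₙ = [[1, abn, 0],[0, a²e^{-b²}n/2 + 1 + c²n/2, 0],[0,0,1]], and Aₙ is an invertible matrix. -/

import Mathlib

/-!
Substituting `X - b` into the recurrence `h (n+1) = X h n - h n' / 2` shows that
`gₙ = hₙ(X - b)` satisfies `g (n+1) = (X - b) gₙ - gₙ' / 2`; hence `gₙ` is monic of degree `n`
and its coefficient of `Xⁿ⁻¹` is `-n b` (so `0` for `hₙ` itself). Each entry of `Qₙ` is a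
combination of such polynomials, multiplied by constants and by `X`, in which the monic degree
`n + 1` parts cancel, so its `Xⁿ`-coefficient can be read off from the leading and subleading
coefficients of the `gₖ`. The matrix `Aₙ` is upper triangular with positive diagonal.
-/

open Matrix Polynomial

/-- The monic Hermite polynomials for the weight e^{-x²}:
h₀ = 1, h_{n+1}(x) = x·hₙ(x) - (1/2)·hₙ'(x). -/
noncomputable def h : ℕ → Polynomial ℝ
  | 0 => 1
  | n + 1 => X * h n - C (1 / 2 : ℝ) * derivative (h n)

/-- The sequence Qₙ of matrix orthogonal polynomials for W. -/
noncomputable def Qmat (a b c : ℝ) (n : ℕ) : Matrix (Fin 3) (Fin 3) (Polynomial ℝ) :=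
  !![(h n).comp (X - C b),
     C a * (h (n + 1) - (h n).comp (X - C b) * X),
     0;
     -(C (a * Real.exp (-b ^ 2) * n / 2)) * (h (n - 1)).comp (X - C b),
     C (a ^ 2 * Real.exp (-b ^ 2) * n / 2) * (h (n - 1)).comp (X - C b) * X
       + h n + C (c ^ 2 * n / 2) * h (n - 1) * X,
     -(C (c * n / 2)) * h (n - 1);
     0,
     C c * (h (n + 1) - h n * X),
     h n]

/-- The leading coefficient Aₙ of Qₙ. -/
noncomputable def Amat (a b c : ℝ) (n : ℕ) : Matrix (Fin 3) (Fin 3) ℝ :=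
  !![1, a * b * n, 0;
     0, a ^ 2 * Real.exp (-b ^ 2) * n / 2 + 1 + c ^ 2 * n / 2, 0;
     0, 0, 1]

namespace Polynomial

def HasTopCoeff {R : Type*} [Semiring R] (p : R[X]) (n : ℕ) (x : R) : Prop :=
  p.degree ≤ n ∧ p.coeff n = x

namespace HasTopCoeff

section Semiring

variable {R : Type*} [Semiring R] {p q : R[X]} {n m : ℕ} {x y : R}

theorem congr_coeff (hp : HasTopCoeff p n x) (h : x = y) : HasTopCoeff p n y :=
  h ▸ hp

theorem zero : HasTopCoeff (0 : R[X]) n 0 :=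
  ⟨degree_zero.trans_le bot_le, coeff_zero n⟩

theorem add (hp : HasTopCoeff p n x) (hq : HasTopCoeff q n y) : HasTopCoeff (p + q) n (x + y) :=
  ⟨(degree_add_le p q).trans (max_le hp.1 hq.1), by rw [coeff_add, hp.2, hq.2]⟩

theorem C_mul (hp : HasTopCoeff p n x) (k : R) : HasTopCoeff (C k * p) n (k * x) :=
  ⟨by rw [C_mul']; exact (degree_smul_le k p).trans hp.1, by rw [coeff_C_mul, hp.2]⟩

theorem mul_X (hp : HasTopCoeff p n x) : HasTopCoeff (p * X) (n + 1) x :=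
  ⟨by exact_mod_cast degree_mul_le_of_le hp.1 degree_X_le, by rw [coeff_mul_X, hp.2]⟩

theorem of_lt (hp : HasTopCoeff p m x) (hmn : m < n) : HasTopCoeff p n 0 :=
  ⟨hp.1.trans (by exact_mod_cast hmn.le),
    coeff_eq_zero_of_degree_lt (hp.1.trans_lt (by exact_mod_cast hmn))⟩

theorem derivative (hp : HasTopCoeff p n x) : HasTopCoeff (derivative p) n 0 :=
  ⟨degree_derivative_le.trans hp.1, by
    rw [coeff_derivative,
      coeff_eq_zero_of_degree_lt (hp.1.trans_lt (by exact_mod_cast n.lt_succ_self)), zero_mul]⟩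

theorem of_succ_zero (hp : HasTopCoeff p (n + 1) 0) : HasTopCoeff p n (p.coeff n) := by
  refine ⟨(degree_le_iff_coeff_zero p n).2 fun k hk => ?_, rfl⟩
  obtain rfl | hk' := (Nat.succ_le_of_lt (Nat.cast_lt.1 hk)).eq_or_lt
  · exact hp.2
  · exact coeff_eq_zero_of_degree_lt (hp.1.trans_lt (by exact_mod_cast hk'))

end Semiring

section Ring

variable {R : Type*} [Ring R] {p q : R[X]} {n : ℕ} {x y : R}

theorem neg (hp : HasTopCoeff p n x) : HasTopCoeff (-p) n (-x) :=
  ⟨(degree_neg p).le.trans hp.1, by rw [coeff_neg, hp.2]⟩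

theorem sub (hp : HasTopCoeff p n x) (hq : HasTopCoeff q n y) : HasTopCoeff (p - q) n (x - y) := by
  simpa only [sub_eq_add_neg] using hp.add hq.neg

theorem sub_of_succ (hp : HasTopCoeff p (n + 1) x) (hq : HasTopCoeff q (n + 1) x) :
    HasTopCoeff (p - q) n (p.coeff n - q.coeff n) := by
  have h0 : HasTopCoeff (p - q) (n + 1) 0 := sub_self x ▸ hp.sub hq
  exact coeff_sub p q n ▸ h0.of_succ_zero

end Ring

end HasTopCoeff

end Polynomial

theorem h_succ_comp_X_sub_C (b : ℝ) (n : ℕ) :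
    (h (n + 1)).comp (X - C b) = (h n).comp (X - C b) * X - C b * (h n).comp (X - C b)
      - C (1 / 2) * derivative ((h n).comp (X - C b)) := by
  simp only [h, sub_comp, mul_comp, X_comp, C_comp, derivative_comp, derivative_sub, derivative_X,
    derivative_C, sub_zero, one_mul]
  ring

theorem hasTopCoeff_h_comp (b : ℝ) (n : ℕ) : HasTopCoeff ((h n).comp (X - C b)) n 1 := by
  induction n with
  | zero => simp [h, HasTopCoeff]
  | succ n ih =>
    rw [h_succ_comp_X_sub_C]
    simpa using (ih.mul_X.sub ((ih.of_lt n.lt_succ_self).C_mul b)).sub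
      ((ih.derivative.of_lt n.lt_succ_self).C_mul _)

theorem coeff_h_succ_comp (b : ℝ) (n : ℕ) :
    ((h (n + 1)).comp (X - C b)).coeff n = -((n + 1) * b) := by
  induction n with
  | zero => simp [h]
  | succ n ih =>
    rw [h_succ_comp_X_sub_C, coeff_sub, coeff_sub, coeff_mul_X, coeff_C_mul, coeff_C_mul, ih,
      (hasTopCoeff_h_comp b (n + 1)).2, (hasTopCoeff_h_comp b (n + 1)).derivative.2]
    push_cast
    ring

theorem hasTopCoeff_h (n : ℕ) : HasTopCoeff (h n) n 1 := by
  simpa using hasTopCoeff_h_comp 0 n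

theorem coeff_h_succ (n : ℕ) : (h (n + 1)).coeff n = 0 := by
  simpa using coeff_h_succ_comp 0 n

theorem hasTopCoeff_h_succ_sub_comp_mul_X (b : ℝ) (n : ℕ) :
    HasTopCoeff (h (n + 1) - (h n).comp (X - C b) * X) n (b * n) := by
  have hH := hasTopCoeff_h_comp b n
  have hX : (h n).comp (X - C b) * X = (h (n + 1)).comp (X - C b) + C b * (h n).comp (X - C b)
      + C (1 / 2) * derivative ((h n).comp (X - C b)) := by
    rw [h_succ_comp_X_sub_C]; ring
  rw [hX, sub_add_eq_sub_sub, sub_add_eq_sub_sub]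
  have hb : b * n =
      (h (n + 1)).coeff n - ((h (n + 1)).comp (X - C b)).coeff n - b * 1 - 1 / 2 * 0 := by
    rw [coeff_h_succ, coeff_h_succ_comp]; ring
  rw [hb]
  exact (((hasTopCoeff_h (n + 1)).sub_of_succ (hasTopCoeff_h_comp b (n + 1))).sub
    (hH.C_mul b)).sub (hH.derivative.C_mul _)

theorem hasTopCoeff_h_succ_sub_mul_X (n : ℕ) : HasTopCoeff (h (n + 1) - h n * X) n 0 := by
  simpa using hasTopCoeff_h_succ_sub_comp_mul_X 0 n

theorem hasTopCoeff_Qmat (a b c : ℝ) (n : ℕ) (i j : Fin 3) :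
    HasTopCoeff (Qmat a b c n i j) n (Amat a b c n i j) := by
  cases n with
  | zero => fin_cases i <;> fin_cases j <;> simp [Qmat, Amat, h, HasTopCoeff]
  | succ m =>
    fin_cases i <;> fin_cases j <;>
      simp only [Qmat, Amat, of_apply, cons_val', cons_val, cons_val_zero, cons_val_one,
        cons_val_fin_one, Fin.zero_eta, Fin.mk_one, Fin.reduceFinMk, Fin.isValue,
        add_tsub_cancel_right, neg_mul]
    · exact hasTopCoeff_h_comp b (m + 1)
    · exact ((hasTopCoeff_h_succ_sub_comp_mul_X b (m + 1)).C_mul a).congr_coeff (mul_assoc ..).symm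
    · exact HasTopCoeff.zero
    · exact ((((hasTopCoeff_h_comp b m).of_lt m.lt_succ_self).C_mul _).neg).congr_coeff (by ring)
    · exact ((((hasTopCoeff_h_comp b m).C_mul _).mul_X.add (hasTopCoeff_h (m + 1))).add
        ((hasTopCoeff_h m).C_mul _).mul_X).congr_coeff (by ring)
    · exact ((((hasTopCoeff_h m).of_lt m.lt_succ_self).C_mul _).neg).congr_coeff (by ring)
    · exact HasTopCoeff.zero
    · exact ((hasTopCoeff_h_succ_sub_mul_X (m + 1)).C_mul c).congr_coeff (mul_zero c)
    · exact hasTopCoeff_h (m + 1)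

theorem det_Amat (a b c : ℝ) (n : ℕ) :
    (Amat a b c n).det = a ^ 2 * Real.exp (-b ^ 2) * n / 2 + 1 + c ^ 2 * n / 2 := by
  simp [Amat, det_fin_three]

/-- every entry of Qₙ has degree at most n, its matrix of n-th
coefficients equals Aₙ, and Aₙ is invertible. -/
theorem Q_leading_coefficient (a b c : ℝ) (n : ℕ) :
    (∀ i j, (Qmat a b c n i j).degree ≤ (n : ℕ)) ∧
    (Matrix.of fun i j => (Qmat a b c n i j).coeff n) = Amat a b c n ∧
    IsUnit (Amat a b c n) := by
  have hQ := hasTopCoeff_Qmat a b c n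
  refine ⟨fun i j => (hQ i j).1, Matrix.ext fun i j => (hQ i j).2, ?_⟩
  rw [isUnit_iff_isUnit_det, det_Amat]
  exact (by positivity : (0 : ℝ) < _).ne'.isUnit
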